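/- Let β > 1/3 be real, let λ_n = n(n−1)(n−2), and for m ≥ 3 set r̃_m = (λ_m^β + λ_{m+1}^β)/2. Then there exist a constant C > 0 and an integer m₀ ≥ 3 such that for all m ≥ m₀, the series ∑_{n=3}^∞ 1/|λ_n^β − r̃_m| converges and satisfies ∑_{n=3}^∞ 1/|λ_n^β − r̃_m| ≤ C. -/

import Mathlib

/-- The eigenvalues `λₙ = n(n−1)(n−2)` of `G = A*³A³`. -/
def lamG (n : ℕ) : ℕ := n * (n - 1) * (n - 2)

/-- The radius `r̃_m = (λ_m^β + λ_{m+1}^β)/2`. -/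
noncomputable def rTilde (β : ℝ) (m : ℕ) : ℝ :=
  ((lamG m : ℝ) ^ β + (lamG (m + 1) : ℝ) ^ β) / 2

/-!
The cube roots `λₙ^{1/3}` are at least one apart, and `t ↦ t^{3β}` is superadditive since
`3β > 1`; hence `λ_{p+k}^β − λ_p^β ≥ k^{3β}`. The midpoint `r̃_m` of a gap of length at least `1`
is therefore at distance at least `1/2 + k^{3β}` from the `k`-th eigenvalue on either side of it,
and `∑ₖ 1/(1/2 + k^{3β})` converges.
-/

open Finset

lemma summable_one_div_add_mul_rpow {c s δ : ℝ} (hs : 1 < s) (hc : 0 < c) (hδ : 0 < δ) :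
    Summable fun k : ℕ => 1 / (δ + c * (k : ℝ) ^ s) := by
  have hshift : Summable fun k : ℕ => 1 / c * (1 / ((k + 1 : ℕ) : ℝ) ^ s) :=
    ((summable_nat_add_iff 1).mpr (Real.summable_one_div_nat_rpow.mpr hs)).mul_left _
  refine (summable_nat_add_iff 1).mp (hshift.of_nonneg_of_le (fun k => by positivity) fun k => ?_)
  rw [one_div_mul_one_div]
  exact one_div_le_one_div_of_le (by positivity) (by linarith)

theorem summable_one_div_abs_sub_midpoint_and_tsum_le {a : ℕ → ℝ} {c s : ℝ} (hs : 1 < s)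
    (hc : 0 < c) (ha : ∀ p k : ℕ, c * (k : ℝ) ^ s ≤ a (p + k) - a p) (m : ℕ) :
    Summable (fun n => 1 / |a n - (a m + a (m + 1)) / 2|) ∧
      ∑' n, 1 / |a n - (a m + a (m + 1)) / 2|
        ≤ 2 * ∑' k : ℕ, 1 / (c / 2 + c * (k : ℝ) ^ s) := by
  set r := (a m + a (m + 1)) / 2 with hr
  set f := fun n => 1 / |a n - r|
  set g := fun k : ℕ => 1 / (c / 2 + c * (k : ℝ) ^ s)
  have hg : Summable g := summable_one_div_add_mul_rpow hs hc (half_pos hc)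
  have hgap : c ≤ a (m + 1) - a m := by simpa using ha m 1
  have hf_le : ∀ n (k : ℕ), c / 2 + c * (k : ℝ) ^ s ≤ |a n - r| → f n ≤ g k := fun n k h =>
    one_div_le_one_div_of_le (by positivity) h
  have head : ∀ n ∈ range (m + 1), f n ≤ g (m - n) := fun n hn => by
    have hgrow := ha n (m - n)
    rw [Nat.add_sub_cancel' (Nat.lt_succ_iff.mp (mem_range.mp hn))] at hgrow
    exact hf_le _ _ (by rw [abs_sub_comm]; exact le_abs.mpr (Or.inl (by linarith [hr])))
  have tail : ∀ k, f (k + (m + 1)) ≤ g k := fun k => by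
    have hgrow := ha (m + 1) k
    rw [add_comm (m + 1)] at hgrow
    exact hf_le _ _ (le_abs.mpr (Or.inl (by linarith [hr])))
  have htail : Summable fun k => f (k + (m + 1)) :=
    hg.of_nonneg_of_le (fun _ => by positivity) tail
  have hf : Summable f := (summable_nat_add_iff (m + 1)).mp htail
  refine ⟨hf, ?_⟩
  rw [← hf.sum_add_tsum_nat_add (m + 1), two_mul]
  gcongr ?_ + ?_
  · calc ∑ n ∈ range (m + 1), f n ≤ ∑ n ∈ range (m + 1), g (m - n) := sum_le_sum head
      _ = ∑ k ∈ range (m + 1), g k := by simpa using sum_range_reflect g (m + 1)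
      _ ≤ ∑' k, g k := hg.sum_le_tsum _ fun _ _ => by positivity
  · exact htail.tsum_le_tsum tail hg

lemma sub_rpow_le_rpow_sub_rpow {u v p : ℝ} (hu : 0 ≤ u) (huv : u ≤ v) (hp : 1 ≤ p) :
    (v - u) ^ p ≤ v ^ p - u ^ p := by
  have := Real.add_rpow_le_rpow_add (sub_nonneg.mpr huv) hu hp
  rw [sub_add_cancel] at this
  linarith

lemma cast_lamG_add_three (n : ℕ) :
    (lamG (n + 3) : ℝ) = ((n : ℝ) + 1) * (n + 2) * (n + 3) := by
  simp only [lamG, show n + 3 - 1 = n + 2 by omega, show n + 3 - 2 = n + 1 by omega]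
  push_cast
  ring

lemma cbrt_lamG_add_one_le (n : ℕ) :
    (lamG (n + 3) : ℝ) ^ (1 / 3 : ℝ) + 1 ≤ (lamG (n + 4) : ℝ) ^ (1 / 3 : ℝ) := by
  have cube : ∀ x : ℝ, 0 ≤ x → (x ^ (1 / 3 : ℝ)) ^ 3 = x := fun x hx => by
    rw [← Real.rpow_natCast, ← Real.rpow_mul hx]; norm_num
  set t := (lamG (n + 3) : ℝ) ^ (1 / 3 : ℝ)
  have ht : t ^ 3 = (n + 1) * (n + 2) * (n + 3) := by rw [cube _ (by positivity), cast_lamG_add_three]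
  refine (pow_le_pow_iff_left₀ (by positivity) (by positivity) three_ne_zero).mp ?_
  rw [cube _ (by positivity), show n + 4 = (n + 1) + 3 from rfl, cast_lamG_add_three]
  push_cast
  -- With `y = n + 2`, `t³ = y³ - y`, so `y - t ≥ 1 / (3y)`, which is just enough.
  set y : ℝ := n + 2
  have hy : 0 < y := by positivity
  have ht0 : 0 ≤ t := by positivity
  have hty : t ≤ y :=
    (pow_le_pow_iff_left₀ ht0 hy.le three_ne_zero).mp (by rw [ht]; nlinarith)
  have hfactor : (y - t) * (y ^ 2 + y * t + t ^ 2) = y := by linear_combination -ht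
  have hQ : (y - t) * (y ^ 2 + y * t + t ^ 2) ≤ (y - t) * (3 * y * (y + t + 1)) :=
    mul_le_mul_of_nonneg_left (by nlinarith) (sub_nonneg.mpr hty)
  have hsep : 1 ≤ 3 * (y - t) * (y + t + 1) := by nlinarith
  nlinarith

lemma cbrt_lamG_add_le (n k : ℕ) :
    (lamG (n + 3) : ℝ) ^ (1 / 3 : ℝ) + k ≤ (lamG (n + k + 3) : ℝ) ^ (1 / 3 : ℝ) := by
  induction k with
  | zero => simp
  | succ k ih =>
    have hstep := cbrt_lamG_add_one_le (n + k)
    push_cast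
    rw [show n + (k + 1) + 3 = n + k + 4 by ring]
    linarith

lemma rpow_sub_rpow_lamG_ge {β : ℝ} (hβ : 1 / 3 ≤ β) (p k : ℕ) :
    (k : ℝ) ^ (3 * β) ≤ (lamG (p + k + 3) : ℝ) ^ β - (lamG (p + 3) : ℝ) ^ β := by
  have hcbrt : ∀ x : ℝ, 0 ≤ x → x ^ β = (x ^ (1 / 3 : ℝ)) ^ (3 * β) := fun x hx => by
    rw [← Real.rpow_mul hx]; ring_nf
  rw [hcbrt _ (by positivity), hcbrt _ (by positivity)]
  have hk := cbrt_lamG_add_le p k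
  calc (k : ℝ) ^ (3 * β)
      ≤ ((lamG (p + k + 3) : ℝ) ^ (1 / 3 : ℝ) - (lamG (p + 3) : ℝ) ^ (1 / 3 : ℝ)) ^ (3 * β) :=
        Real.rpow_le_rpow (by positivity) (by linarith) (by linarith)
    _ ≤ _ := sub_rpow_le_rpow_sub_rpow (by positivity) (by linarith [k.cast_nonneg (α := ℝ)])
        (by linarith)

/-- For `β > 1/3` there are `C > 0` and `m₀ ≥ 3` such that for all `m ≥ m₀`
the series `∑_{n=3}^∞ 1/|λₙ^β − r̃_m|` converges and is bounded by `C`. -/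
theorem lamG_resolvent_series_bound (β : ℝ) (hβ : 1 / 3 < β) :
    ∃ C > 0, ∃ m₀ : ℕ, 3 ≤ m₀ ∧ ∀ m : ℕ, m₀ ≤ m →
      Summable (fun n : ℕ => 1 / |((lamG (n + 3) : ℝ)) ^ β - rTilde β m|) ∧
        ∑' n : ℕ, 1 / |((lamG (n + 3) : ℝ)) ^ β - rTilde β m| ≤ C := by
  set a : ℕ → ℝ := fun n => (lamG (n + 3) : ℝ) ^ β
  have hs : 1 < 3 * β := by linarith
  have ha : ∀ p k : ℕ, 1 * (k : ℝ) ^ (3 * β) ≤ a (p + k) - a p := fun p k => by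
    simpa [a] using rpow_sub_rpow_lamG_ge hβ.le p k
  have hg := summable_one_div_add_mul_rpow hs one_pos (half_pos one_pos)
  refine ⟨2 * ∑' k : ℕ, 1 / (1 / 2 + 1 * (k : ℝ) ^ (3 * β)),
    mul_pos two_pos (hg.tsum_pos (fun _ => by positivity) 0 (by positivity)), 3, le_rfl,
    fun m hm => ?_⟩
  obtain ⟨μ, rfl⟩ := Nat.exists_eq_add_of_le' hm
  have hr : rTilde β (μ + 3) = (a μ + a (μ + 1)) / 2 := by simp only [rTilde, a, add_right_comm]
  rw [hr]
  exact summable_one_div_abs_sub_midpoint_and_tsum_le hs one_pos ha μ
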